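/- arXiv:2305.00869 — 3 statements merged into one kernel-verified Lean document; each statement's English description precedes it below -/
import Mathlib

section
/- Suppose each density p_c is strictly positive Lebesgue-almost everywhere on the set {x : p_x(x) > 0}, and suppose (ĥ_1, …, ĥ_C) minimizes the multinomial logistic loss L over all measurable tuples with finite loss, i.e. L(ĥ_1, …, ĥ_C) ≤ L(h_1, …, h_C) for every such tuple. Then for every pair of indices i, j ∈ {1, …, C} and for p_x-almost every x with p_x(x) > 0, log( p_i(x) / p_j(x) ) = ĥ_i(x) − ĥ_j(x). -/
open MeasureTheory

/-- Gibbs' inequality with equality case, for strictly positive probability vectors. -/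
lemma gibbs_aux {C : ℕ} (q s : Fin C → ℝ) (hq : ∀ c, 0 < q c) (hs : ∀ c, 0 < s c)
    (hq1 : ∑ c, q c = 1) (hs1 : ∑ c, s c = 1) :
    0 ≤ ∑ c, q c * (Real.log (q c) - Real.log (s c)) ∧
      (∑ c, q c * (Real.log (q c) - Real.log (s c)) = 0 → ∀ c, s c = q c) := by
  have key : ∀ c : Fin C, q c - s c ≤ q c * (Real.log (q c) - Real.log (s c)) := by
    intro c
    have hq0 : q c ≠ 0 := (hq c).ne'
    have h1 : Real.log (s c / q c) ≤ s c / q c - 1 :=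
      Real.log_le_sub_one_of_pos (div_pos (hs c) (hq c))
    have h2 : Real.log (s c / q c) = Real.log (s c) - Real.log (q c) :=
      Real.log_div (hs c).ne' hq0
    have h3 : q c * (s c / q c - 1) = s c - q c := by field_simp
    rw [h2] at h1
    have h4 := mul_le_mul_of_nonneg_left h1 (hq c).le
    nlinarith [h4, h3]
  have hsum : ∑ c, (q c - s c) ≤ ∑ c, q c * (Real.log (q c) - Real.log (s c)) :=
    Finset.sum_le_sum fun c _ => key c
  have hz : ∑ c : Fin C, (q c - s c) = 0 := by
    rw [Finset.sum_sub_distrib, hq1, hs1]; ring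
  constructor
  · linarith
  · intro h0 c
    by_contra hne
    have hq0 : q c ≠ 0 := (hq c).ne'
    have hstrict : q c - s c < q c * (Real.log (q c) - Real.log (s c)) := by
      have hne1 : s c / q c ≠ 1 := by
        intro h
        rw [div_eq_iff hq0, one_mul] at h
        exact hne h
      have h1 : Real.log (s c / q c) < s c / q c - 1 :=
        Real.log_lt_sub_one_of_pos (div_pos (hs c) (hq c)) hne1
      have h2 : Real.log (s c / q c) = Real.log (s c) - Real.log (q c) :=
        Real.log_div (hs c).ne' hq0
      have h3 : q c * (s c / q c - 1) = s c - q c := by field_simp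
      rw [h2] at h1
      have h4 := mul_lt_mul_of_pos_left h1 (hq c)
      nlinarith [h4, h3]
    have hlt : ∑ c : Fin C, (q c - s c) < ∑ c, q c * (Real.log (q c) - Real.log (s c)) :=
      Finset.sum_lt_sum (fun i _ => key i) ⟨c, Finset.mem_univ c, hstrict⟩
    rw [hz, h0] at hlt
    exact lt_irrefl 0 hlt

/-- If each density `p c` is strictly positive Lebesgue-a.e. on the set
`{x : p_x x > 0}` and `hhat` minimizes the multinomial logistic loss over all measurable
tuples with finite loss, then for every pair `i, j` and `p_x`-almost every `x` with
`p_x x > 0`, `log (p i x / p j x) = hhat i x − hhat j x`. -/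
theorem minimizer_recovers_log_ratios
    {d C : ℕ} (hC : 2 ≤ C)
    (p : Fin C → (Fin d → ℝ) → ℝ) (w : Fin C → ℝ)
    (hp_meas : ∀ c, Measurable (p c))
    (hp_nonneg : ∀ c x, 0 ≤ p c x)
    (hp_prob : ∀ c, ∫ x, p c x = 1)
    (hw_pos : ∀ c, 0 < w c) (hw_sum : ∑ c, w c = 1)
    (px : (Fin d → ℝ) → ℝ)
    (hpx : ∀ x, px x = ∑ c, w c * p c x)
    -- each density is strictly positive Lebesgue-a.e. on `{x | 0 < px x}`:
    (hp_pos : ∀ c, ∀ᵐ x, 0 < px x → 0 < p c x)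
    -- the conditional entropy is finite:
    (hHfin : Integrable (fun x =>
      px x * ∑ c, (w c * p c x / px x) * Real.log (w c * p c x / px x)))
    (L : (Fin C → (Fin d → ℝ) → ℝ) → ℝ)
    (hL : ∀ h, L h = ∑ c, w c * ∫ x, p c x *
      (-(Real.log (w c)) - h c x + Real.log (∑ k, w k * Real.exp (h k x))))
    (hhat : Fin C → (Fin d → ℝ) → ℝ)
    (hhat_meas : ∀ c, Measurable (hhat c))
    (hhat_fin : ∀ c, Integrable (fun x => p c x *
      (-(Real.log (w c)) - hhat c x + Real.log (∑ k, w k * Real.exp (hhat k x)))))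
    -- `hhat` minimizes `L` over all measurable tuples with finite loss:
    (hmin : ∀ h : Fin C → (Fin d → ℝ) → ℝ, (∀ c, Measurable (h c)) →
      (∀ c, Integrable (fun x => p c x *
        (-(Real.log (w c)) - h c x + Real.log (∑ k, w k * Real.exp (h k x))))) →
      L hhat ≤ L h) :
    ∀ i j : Fin C,
      ∀ᵐ x ∂(volume.withDensity fun x => ENNReal.ofReal (px x)),
        0 < px x → Real.log (p i x / p j x) = hhat i x - hhat j x := by
  have hCpos : 0 < C := lt_of_lt_of_le two_pos hC
  haveI : Nonempty (Fin C) := Fin.pos_iff_nonempty.mp hCpos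
  -- basic integrability and positivity facts
  have hp_int : ∀ c, Integrable (p c) := by
    intro c
    by_contra h
    have h1 := hp_prob c
    rw [integral_undef h] at h1
    exact one_ne_zero h1.symm
  have hpx' : px = fun x => ∑ c, w c * p c x := funext hpx
  have hpx_meas : Measurable px := by
    rw [hpx']; exact Finset.measurable_sum _ fun c _ => (hp_meas c).const_mul _
  have hpx_int : Integrable px := by
    rw [hpx']; exact integrable_finset_sum _ fun c _ => (hp_int c).const_mul _
  have hpx_nonneg : ∀ x, 0 ≤ px x := by
    intro x; rw [hpx]
    exact Finset.sum_nonneg fun c _ => mul_nonneg (hw_pos c).le (hp_nonneg c x)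
  have hterm_le : ∀ c x, w c * p c x ≤ px x := by
    intro c x; rw [hpx]
    exact Finset.single_le_sum (f := fun k => w k * p k x)
      (fun k _ => mul_nonneg (hw_pos k).le (hp_nonneg k x)) (Finset.mem_univ c)
  have hzero : ∀ x, px x = 0 → ∀ c, p c x = 0 := by
    intro x h0 c
    have h1 := hterm_le c x
    rw [h0] at h1
    have h2 : w c * p c x = 0 :=
      le_antisymm h1 (mul_nonneg (hw_pos c).le (hp_nonneg c x))
    rcases mul_eq_zero.mp h2 with h | h
    · exact absurd h (hw_pos c).ne'
    · exact h
  have hae : ∀ᵐ x, ∀ c, 0 < px x → 0 < p c x := by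
    rw [ae_all_iff]; exact hp_pos
  -- the candidate minimizer: log-densities relative to the mixture
  set hstar : Fin C → (Fin d → ℝ) → ℝ := fun c x => Real.log (p c x / px x) with hstar_def
  set G : Fin C → (Fin d → ℝ) → ℝ :=
    fun c x => -(p c x * Real.log (w c * p c x / px x)) with hG_def
  have hFG : ∀ c, (fun x => p c x * (-(Real.log (w c)) - hstar c x +
      Real.log (∑ k, w k * Real.exp (hstar k x)))) =ᵐ[volume] G c := by
    intro c
    filter_upwards [hae] with x hx
    rcases eq_or_lt_of_le (hpx_nonneg x) with h0 | hpos
    · have h0' : px x = 0 := h0.symm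
      simp [hG_def, hzero x h0' c]
    · have hpk : ∀ k, 0 < p k x := fun k => hx k hpos
      have hsum1 : ∑ k, w k * Real.exp (hstar k x) = 1 := by
        calc ∑ k, w k * Real.exp (hstar k x) = ∑ k, w k * p k x / px x := by
              refine Finset.sum_congr rfl fun k _ => ?_
              simp only [hstar_def]
              rw [Real.exp_log (div_pos (hpk k) hpos), mul_div_assoc]
          _ = (∑ k, w k * p k x) / px x := by rw [Finset.sum_div]
          _ = 1 := by rw [← hpx x]; exact div_self hpos.ne'
      have hlogmul : Real.log (w c * p c x / px x)
          = Real.log (w c) + Real.log (p c x / px x) := by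
        rw [mul_div_assoc, Real.log_mul (hw_pos c).ne' (div_pos (hpk c) hpos).ne']
      simp only [hG_def, hstar_def]
      rw [hsum1, Real.log_one, hlogmul]
      ring
  have hG_meas : ∀ c, Measurable (G c) := by
    intro c
    exact ((hp_meas c).mul
      (Real.measurable_log.comp (((hp_meas c).const_mul (w c)).div hpx_meas))).neg
  have hG_int : ∀ c, Integrable (G c) := by
    intro c
    refine Integrable.mono' (hpx_int.div_const (w c)) (hG_meas c).aestronglyMeasurable ?_
    filter_upwards with x
    rcases eq_or_lt_of_le (hp_nonneg c x) with h0 | hpc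
    · have h0' : p c x = 0 := h0.symm
      simp only [hG_def, h0', zero_mul, neg_zero, norm_zero]
      exact div_nonneg (hpx_nonneg x) (hw_pos c).le
    · have hpxx : 0 < px x := lt_of_lt_of_le (mul_pos (hw_pos c) hpc) (hterm_le c x)
      set t := w c * p c x / px x with ht_def
      have ht : 0 < t := div_pos (mul_pos (hw_pos c) hpc) hpxx
      have ht1 : t ≤ 1 := (div_le_one hpxx).mpr (hterm_le c x)
      have hlt : Real.log t ≤ 0 := Real.log_nonpos ht.le ht1
      have hinv : -Real.log t ≤ 1 / t := by
        have h1 : Real.log (1 / t) ≤ 1 / t - 1 :=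
          Real.log_le_sub_one_of_pos (by positivity)
        rw [Real.log_div one_ne_zero ht.ne', Real.log_one] at h1
        linarith
      have hGx : G c x = p c x * (-Real.log t) := by simp only [hG_def]; ring
      have hbig : p c x * (1 / t) = px x / w c := by
        have h1 : p c x ≠ 0 := hpc.ne'
        have h2 : px x ≠ 0 := hpxx.ne'
        have h3 : w c ≠ 0 := (hw_pos c).ne'
        rw [ht_def]
        field_simp
      have h5 : p c x * (-Real.log t) ≤ p c x * (1 / t) :=
        mul_le_mul_of_nonneg_left hinv hpc.le
      rw [hGx, Real.norm_eq_abs, abs_of_nonneg (by nlinarith)]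
      rw [hbig] at h5
      exact h5
  -- the entropy integrand
  set g : (Fin d → ℝ) → ℝ :=
    fun x => px x * ∑ c, (w c * p c x / px x) * Real.log (w c * p c x / px x) with hg_def
  have hg_eq : ∀ x, g x = ∑ c, -(w c * G c x) := by
    intro x
    simp only [hg_def]
    rw [Finset.mul_sum]
    refine Finset.sum_congr rfl fun c _ => ?_
    rcases eq_or_lt_of_le (hpx_nonneg x) with h0 | hpos
    · have h0' : px x = 0 := h0.symm
      simp [hG_def, hzero x h0' c]
    · have hne : px x ≠ 0 := hpos.ne'
      simp only [hG_def]
      generalize Real.log (w c * p c x / px x) = Lg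
      field_simp
  have hg_int_eq : ∫ x, g x = ∑ c, -(w c * ∫ x, G c x) := by
    have h1 : ∫ x, g x = ∫ x, ∑ c, -(w c * G c x) := by
      refine integral_congr_ae (Filter.Eventually.of_forall fun x => hg_eq x)
    rw [h1, integral_finset_sum (f := fun c x => -(w c * G c x)) Finset.univ
      (fun c _ => ((hG_int c).const_mul (w c)).neg)]
    refine Finset.sum_congr rfl fun c _ => ?_
    rw [integral_neg, integral_const_mul]
  have hLstar : L hstar = ∑ c, w c * ∫ x, G c x := by
    rw [hL]
    refine Finset.sum_congr rfl fun c _ => ?_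
    rw [integral_congr_ae (hFG c)]
  have hLstar2 : L hstar = -∫ x, g x := by
    rw [hLstar, hg_int_eq, ← Finset.sum_neg_distrib]
    simp
  -- apply minimality to `hstar`
  have hstar_meas : ∀ c, Measurable (hstar c) := by
    intro c
    exact Real.measurable_log.comp ((hp_meas c).div hpx_meas)
  have hstar_int : ∀ c, Integrable (fun x => p c x * (-(Real.log (w c)) - hstar c x +
      Real.log (∑ k, w k * Real.exp (hstar k x)))) := fun c => (hG_int c).congr (hFG c).symm
  have hle := hmin hstar hstar_meas hstar_int
  -- the excess-risk integrand
  set f : (Fin d → ℝ) → ℝ := fun x => (∑ c, w c * (p c x * (-(Real.log (w c)) - hhat c x +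
      Real.log (∑ k, w k * Real.exp (hhat k x))))) + g x with hf_def
  have hf_int : Integrable f := by
    exact (integrable_finset_sum _ fun c _ => (hhat_fin c).const_mul (w c)).add hHfin
  have hint_f : ∫ x, f x = L hhat + ∫ x, g x := by
    simp only [hf_def]
    rw [integral_add (integrable_finset_sum _ fun c _ => (hhat_fin c).const_mul (w c)) hHfin,
      integral_finset_sum _ (fun c _ => (hhat_fin c).const_mul (w c)), hL]
    congr 1
    refine Finset.sum_congr rfl fun c _ => integral_const_mul _ _
  have hle0 : ∫ x, f x ≤ 0 := by
    rw [hint_f]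
    rw [hLstar2] at hle
    linarith
  -- pointwise structure of f
  have hkey : ∀ᵐ x, 0 ≤ f x ∧ (0 < px x → f x = 0 →
      ∀ c, w c * Real.exp (hhat c x) / (∑ k, w k * Real.exp (hhat k x))
        = w c * p c x / px x) := by
    filter_upwards [hae] with x hx
    rcases eq_or_lt_of_le (hpx_nonneg x) with h0 | hpos
    · have h0' : px x = 0 := h0.symm
      constructor
      · have hfz : f x = 0 := by
          simp [hf_def, hg_def, h0', hzero x h0']
        rw [hfz]
      · intro hpos'
        rw [h0'] at hpos'
        exact absurd hpos' (lt_irrefl 0)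
    · have hpk : ∀ k, 0 < p k x := fun k => hx k hpos
      set S := ∑ k, w k * Real.exp (hhat k x) with hS_def
      have hS : 0 < S :=
        Finset.sum_pos (fun k _ => mul_pos (hw_pos k) (Real.exp_pos _)) Finset.univ_nonempty
      set qv : Fin C → ℝ := fun c => w c * p c x / px x with hqv_def
      set sv : Fin C → ℝ := fun c => w c * Real.exp (hhat c x) / S with hsv_def
      have hqpos : ∀ c, 0 < qv c := fun c => div_pos (mul_pos (hw_pos c) (hpk c)) hpos
      have hspos : ∀ c, 0 < sv c := fun c => div_pos (mul_pos (hw_pos c) (Real.exp_pos _)) hS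
      have hq1 : ∑ c, qv c = 1 := by
        simp only [hqv_def]
        rw [← Finset.sum_div, ← hpx x]
        exact div_self hpos.ne'
      have hs1 : ∑ c, sv c = 1 := by
        simp only [hsv_def]
        rw [← Finset.sum_div]
        exact div_self hS.ne'
      have hlogs : ∀ c, Real.log (sv c) = Real.log (w c) + hhat c x - Real.log S := by
        intro c
        simp only [hsv_def]
        rw [Real.log_div (mul_pos (hw_pos c) (Real.exp_pos _)).ne' hS.ne',
          Real.log_mul (hw_pos c).ne' (Real.exp_pos _).ne', Real.log_exp]
      have hpxq : ∀ c, px x * qv c = w c * p c x := by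
        intro c
        simp only [hqv_def]
        rw [mul_comm]
        exact div_mul_cancel₀ _ hpos.ne'
      have hfx : f x = px x * ∑ c, qv c * (Real.log (qv c) - Real.log (sv c)) := by
        simp only [hf_def, hg_def, ← hS_def]
        rw [Finset.mul_sum, Finset.mul_sum, ← Finset.sum_add_distrib]
        refine Finset.sum_congr rfl fun c _ => ?_
        have hq' : w c * p c x / px x = qv c := by simp only [hqv_def]
        rw [hq', hlogs c]
        linear_combination (Real.log (w c) + hhat c x - Real.log S) * hpxq c
      have hgibbs := gibbs_aux qv sv hqpos hspos hq1 hs1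
      constructor
      · rw [hfx]
        exact mul_nonneg (hpx_nonneg x) hgibbs.1
      · intro _ hfz c
        have hD : ∑ c, qv c * (Real.log (qv c) - Real.log (sv c)) = 0 := by
          rw [hfx] at hfz
          rcases mul_eq_zero.mp hfz with h | h
          · exact absurd h hpos.ne'
          · exact h
        have := hgibbs.2 hD c
        simpa only [hsv_def, hqv_def, ← hS_def] using this
  have hf_nonneg : 0 ≤ᵐ[volume] f := hkey.mono fun x h => h.1
  have hint0 : ∫ x, f x = 0 :=
    le_antisymm hle0 (integral_nonneg_of_ae hf_nonneg)
  have hf0 : f =ᵐ[volume] 0 := (integral_eq_zero_iff_of_nonneg_ae hf_nonneg hf_int).mp hint0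
  -- conclude
  intro i j
  rw [MeasureTheory.ae_withDensity_iff hpx_meas.ennreal_ofReal]
  filter_upwards [hkey, hf0, hae] with x hk hfx0 hx _ hpos
  have hfz : f x = 0 := hfx0
  have heq := hk.2 hpos hfz
  set S := ∑ k, w k * Real.exp (hhat k x) with hS_def
  have hS : 0 < S :=
    Finset.sum_pos (fun k _ => mul_pos (hw_pos k) (Real.exp_pos _)) Finset.univ_nonempty
  have hpk : ∀ k, 0 < p k x := fun k => hx k hpos
  have key : ∀ c : Fin C, p c x = Real.exp (hhat c x) * px x / S := by
    intro c
    have hc := heq c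
    rw [div_eq_div_iff hS.ne' hpos.ne'] at hc
    rw [mul_assoc, mul_assoc] at hc
    have hc' : Real.exp (hhat c x) * px x = p c x * S :=
      mul_left_cancel₀ (hw_pos c).ne' hc
    rw [eq_div_iff hS.ne']
    linarith
  have hratio : p i x / p j x = Real.exp (hhat i x - hhat j x) := by
    rw [key i, key j, Real.exp_sub]
    have h1 : px x ≠ 0 := hpos.ne'
    have h2 : S ≠ 0 := hS.ne'
    have h3 : Real.exp (hhat j x) ≠ 0 := (Real.exp_pos _).ne'
    field_simp
  rw [hratio, Real.log_exp]
end

section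
/- Let p, q, m_1, …, m_K be probability densities on ℝ^d, each strictly positive Lebesgue-almost everywhere on the set where the mixture density p_x(x) = π_1 p(x) + π_2 q(x) + Σ_{k=1}^K π_{2+k} m_k(x) is positive. Set C = K + 2, p_1 = p, p_2 = q, and p_{2+k} = m_k for k = 1,…,K. If (ĥ_1, …, ĥ_C) minimizes the multinomial logistic loss L over all measurable tuples with finite loss, then the estimator log r̂(x) := ĥ_1(x) − ĥ_2(x) satisfies log r̂(x) = log( p(x)/q(x) ) for p_x-almost every x with p_x(x) > 0, i.e. on the union of the supports of p, q, m_1, …, m_K. -/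
open MeasureTheory

/-- Gibbs' inequality with equality case. -/
lemma gibbs_ineq {n : ℕ} (a s : Fin n → ℝ) (A : ℝ) (hA : ∑ j, a j = A)
    (ha : ∀ i, 0 < a i) (hs : ∀ i, 0 < s i) (hssum : ∑ i, s i = 1) :
    0 ≤ ∑ i, a i * Real.log (a i / (A * s i)) ∧
    ((∑ i, a i * Real.log (a i / (A * s i))) = 0 → ∀ i, a i = A * s i) := by
  have hne : (Finset.univ : Finset (Fin n)).Nonempty := by
    by_contra h
    rw [Finset.not_nonempty_iff_eq_empty] at h
    rw [h] at hssum
    simp at hssum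
  have hApos : 0 < A := by
    rw [← hA]
    exact Finset.sum_pos (fun i _ => ha i) hne
  have hkey : ∀ i : Fin n, a i * Real.log (a i / (A * s i))
      = -(a i * Real.log ((A * s i) / a i)) := by
    intro i
    rw [show a i / (A * s i) = ((A * s i) / a i)⁻¹ by rw [inv_div], Real.log_inv]
    ring
  have hub : ∀ i : Fin n, a i * Real.log ((A * s i) / a i) ≤ A * s i - a i := by
    intro i
    have ht : 0 < (A * s i) / a i := div_pos (mul_pos hApos (hs i)) (ha i)
    have hle := Real.log_le_sub_one_of_pos ht
    have h2 : a i * Real.log ((A * s i) / a i) ≤ a i * ((A * s i) / a i - 1) :=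
      mul_le_mul_of_nonneg_left hle (ha i).le
    calc a i * Real.log ((A * s i) / a i) ≤ a i * ((A * s i) / a i - 1) := h2
      _ = A * s i - a i := by field_simp [(ha i).ne']
  have hsum_ub : ∑ i, a i * Real.log ((A * s i) / a i) ≤ 0 := by
    calc ∑ i, a i * Real.log ((A * s i) / a i) ≤ ∑ i, (A * s i - a i) :=
          Finset.sum_le_sum fun i _ => hub i
      _ = A * (∑ i, s i) - ∑ i, a i := by rw [Finset.sum_sub_distrib, Finset.mul_sum]
      _ = 0 := by rw [hssum, hA]; ring
  constructor
  · simp only [hkey]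
    rw [Finset.sum_neg_distrib]
    linarith
  · intro h0 i
    by_contra hne'
    have hti : (A * s i) / a i ≠ 1 := by
      intro h1
      apply hne'
      have := (div_eq_one_iff_eq (ha i).ne').mp h1
      linarith
    have hstrict : a i * Real.log ((A * s i) / a i) < A * s i - a i := by
      have ht : 0 < (A * s i) / a i := div_pos (mul_pos hApos (hs i)) (ha i)
      have hlt := Real.log_lt_sub_one_of_pos ht hti
      have h2 : a i * Real.log ((A * s i) / a i) < a i * ((A * s i) / a i - 1) :=
        (mul_lt_mul_iff_right₀ (ha i)).mpr hlt
      calc a i * Real.log ((A * s i) / a i) < a i * ((A * s i) / a i - 1) := h2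
        _ = A * s i - a i := by field_simp [(ha i).ne']
    have hsum_lt : ∑ i, a i * Real.log ((A * s i) / a i) < 0 := by
      have := Finset.sum_lt_sum (fun j (_ : j ∈ Finset.univ) => hub j)
        ⟨i, Finset.mem_univ i, hstrict⟩
      calc ∑ j, a j * Real.log ((A * s j) / a j) < ∑ j, (A * s j - a j) := this
        _ = A * (∑ j, s j) - ∑ j, a j := by rw [Finset.sum_sub_distrib, Finset.mul_sum]
        _ = 0 := by rw [hssum, hA]; ring
    rw [show (0:ℝ) = -0 from (neg_zero).symm] at h0
    simp only [hkey] at h0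
    rw [Finset.sum_neg_distrib] at h0
    have := neg_injective h0
    linarith

/-- With `C = K + 2` classes whose densities are `p, q, m 1, …, m K`
(each strictly positive Lebesgue-a.e. on `{x | 0 < p_x x}`), if `hhat` minimizes
the multinomial logistic loss over all measurable tuples with finite loss, then the
estimator `log r̂ = hhat 0 − hhat 1` equals `log (p x / q x)` for `p_x`-almost every
`x` with `p_x x > 0`, i.e. on the union of the supports of `p, q, m 1, …, m K`. -/
theorem mdre_estimator_correct
    {d K : ℕ}
    (p q : (Fin d → ℝ) → ℝ) (m : Fin K → (Fin d → ℝ) → ℝ)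
    (pf : Fin (K + 2) → (Fin d → ℝ) → ℝ)
    (hpf0 : pf 0 = p) (hpf1 : pf 1 = q)
    (hpfm : ∀ k : Fin K, pf k.succ.succ = m k)
    (w : Fin (K + 2) → ℝ)
    (hp_meas : ∀ c, Measurable (pf c))
    (hp_nonneg : ∀ c x, 0 ≤ pf c x)
    (hp_prob : ∀ c, ∫ x, pf c x = 1)
    (hw_pos : ∀ c, 0 < w c) (hw_sum : ∑ c, w c = 1)
    (px : (Fin d → ℝ) → ℝ)
    (hpx : ∀ x, px x = ∑ c, w c * pf c x)
    -- each density is strictly positive Lebesgue-a.e. on `{x | 0 < px x}`: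
    (hp_pos : ∀ c, ∀ᵐ x, 0 < px x → 0 < pf c x)
    -- the conditional entropy is finite:
    (hHfin : Integrable (fun x =>
      px x * ∑ c, (w c * pf c x / px x) * Real.log (w c * pf c x / px x)))
    (L : (Fin (K + 2) → (Fin d → ℝ) → ℝ) → ℝ)
    (hL : ∀ h, L h = ∑ c, w c * ∫ x, pf c x *
      (-(Real.log (w c)) - h c x + Real.log (∑ k, w k * Real.exp (h k x))))
    (hhat : Fin (K + 2) → (Fin d → ℝ) → ℝ)
    (hhat_meas : ∀ c, Measurable (hhat c))
    (hhat_fin : ∀ c, Integrable (fun x => pf c x *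
      (-(Real.log (w c)) - hhat c x + Real.log (∑ k, w k * Real.exp (hhat k x)))))
    (hmin : ∀ h : Fin (K + 2) → (Fin d → ℝ) → ℝ, (∀ c, Measurable (h c)) →
      (∀ c, Integrable (fun x => pf c x *
        (-(Real.log (w c)) - h c x + Real.log (∑ k, w k * Real.exp (h k x))))) →
      L hhat ≤ L h)
    (logr : (Fin d → ℝ) → ℝ)
    (hlogr : ∀ x, logr x = hhat 0 x - hhat 1 x) :
    ∀ᵐ x ∂(volume.withDensity fun x => ENNReal.ofReal (px x)),
      0 < px x → logr x = Real.log (p x / q x) := by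
  classical
  -- basic positivity / measurability facts
  have hpx_nonneg : ∀ x, 0 ≤ px x := fun x => by
    rw [hpx]
    exact Finset.sum_nonneg fun c _ => mul_nonneg (hw_pos c).le (hp_nonneg c x)
  have hpx_meas : Measurable px := by
    have h1 : Measurable fun x => ∑ c, w c * pf c x :=
      Finset.measurable_sum _ fun c _ => (hp_meas c).const_mul (w c)
    have : px = fun x => ∑ c, w c * pf c x := funext hpx
    rw [this]; exact h1
  have hzero : ∀ x, px x = 0 → ∀ c, pf c x = 0 := by
    intro x h0 c
    have hsum0 : ∑ c, w c * pf c x = 0 := by rw [← hpx x]; exact h0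
    have := (Finset.sum_eq_zero_iff_of_nonneg
      (fun c _ => mul_nonneg (hw_pos c).le (hp_nonneg c x))).mp hsum0 c (Finset.mem_univ c)
    exact (mul_eq_zero.mp this).resolve_left (hw_pos c).ne'
  have hwpf_le : ∀ c x, w c * pf c x ≤ px x := fun c x => by
    rw [hpx]
    exact Finset.single_le_sum
      (fun k _ => mul_nonneg (hw_pos k).le (hp_nonneg k x)) (Finset.mem_univ c)
  have hZpos : ∀ x, 0 < ∑ k, w k * Real.exp (hhat k x) := fun x =>
    Finset.sum_pos (fun k _ => mul_pos (hw_pos k) (Real.exp_pos _)) Finset.univ_nonempty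
  -- the functions e, G, F
  set e : Fin (K + 2) → (Fin d → ℝ) → ℝ :=
    fun c x => -(pf c x * Real.log (w c * pf c x / px x)) with he_def
  have he_nonneg : ∀ c x, 0 ≤ e c x := by
    intro c x
    rcases eq_or_lt_of_le (hp_nonneg c x) with h | h
    · simp [he_def, ← h]
    · have hpxpos : 0 < px x := lt_of_lt_of_le (mul_pos (hw_pos c) h) (hwpf_le c x)
      have hr1 : w c * pf c x / px x ≤ 1 := (div_le_one hpxpos).mpr (hwpf_le c x)
      have hlog : Real.log (w c * pf c x / px x) ≤ 0 :=
        Real.log_nonpos (div_nonneg (mul_nonneg (hw_pos c).le (hp_nonneg c x)) (hpx_nonneg x)) hr1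
      simp only [he_def]
      nlinarith
  have he_meas : ∀ c, Measurable (e c) := fun c =>
    ((hp_meas c).mul ((((hp_meas c).const_mul (w c)).div hpx_meas).log)).neg
  set G : (Fin d → ℝ) → ℝ :=
    fun x => -(px x * ∑ c, (w c * pf c x / px x) * Real.log (w c * pf c x / px x)) with hG_def
  have hG_int : Integrable G := hHfin.neg
  have hGe : ∀ x, G x = ∑ c, w c * e c x := by
    intro x
    rcases eq_or_lt_of_le (hpx_nonneg x) with h | h
    · have hz := hzero x h.symm
      simp [hG_def, he_def, ← h, hz]
    · have hterm : ∀ c : Fin (K + 2),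
          px x * ((w c * pf c x / px x) * Real.log (w c * pf c x / px x))
            = -(w c * e c x) := by
        intro c
        simp only [he_def]
        field_simp
      simp only [hG_def, Finset.mul_sum]
      rw [show ∑ c, px x * ((w c * pf c x / px x) * Real.log (w c * pf c x / px x))
            = ∑ c, -(w c * e c x) from Finset.sum_congr rfl fun c _ => hterm c,
        Finset.sum_neg_distrib, neg_neg]
  have he_int : ∀ c, Integrable (e c) := by
    intro c
    refine (hG_int.const_mul ((w c)⁻¹)).mono' (he_meas c).aestronglyMeasurable ?_
    refine Filter.Eventually.of_forall fun x => ?_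
    rw [Real.norm_of_nonneg (he_nonneg c x)]
    have h1 : w c * e c x ≤ G x := by
      rw [hGe x]
      exact Finset.single_le_sum
        (fun k _ => mul_nonneg (hw_pos k).le (he_nonneg k x)) (Finset.mem_univ c)
    have h2 := mul_le_mul_of_nonneg_left h1 (inv_nonneg.mpr (hw_pos c).le)
    rwa [inv_mul_cancel_left₀ (hw_pos c).ne'] at h2
  set F : (Fin d → ℝ) → ℝ := fun x => ∑ c, w c * (pf c x *
    (-(Real.log (w c)) - hhat c x + Real.log (∑ k, w k * Real.exp (hhat k x)))) with hF_def
  have hF_int : Integrable F :=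
    integrable_finset_sum _ fun c _ => (hhat_fin c).const_mul (w c)
  have hintF : ∫ x, F x = L hhat := by
    rw [hL, hF_def]
    rw [integral_finset_sum _ fun c _ => (hhat_fin c).const_mul (w c)]
    exact Finset.sum_congr rfl fun c _ => integral_const_mul _ _
  -- the comparison function h* = log ∘ pf
  have hI : ∀ c, (fun x => pf c x * (-(Real.log (w c)) - Real.log (pf c x)
      + Real.log (∑ k, w k * Real.exp (Real.log (pf k x))))) =ᵐ[volume] e c := by
    intro c
    filter_upwards [ae_all_iff.mpr hp_pos] with x hx
    rcases eq_or_lt_of_le (hpx_nonneg x) with h | h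
    · have hz := hzero x h.symm
      simp [he_def, hz]
    · have hpfpos : ∀ k, 0 < pf k x := fun k => hx k h
      have hZs : ∑ k, w k * Real.exp (Real.log (pf k x)) = px x := by
        rw [hpx]
        exact Finset.sum_congr rfl fun k _ => by rw [Real.exp_log (hpfpos k)]
      rw [hZs]
      simp only [he_def]
      rw [Real.log_div (mul_pos (hw_pos c) (hpfpos c)).ne' h.ne',
        Real.log_mul (hw_pos c).ne' (hpfpos c).ne']
      ring
  have hstar_int : ∀ c, Integrable (fun x => pf c x * (-(Real.log (w c))
      - Real.log (pf c x) + Real.log (∑ k, w k * Real.exp (Real.log (pf k x))))) :=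
    fun c => (he_int c).congr (hI c).symm
  have hintG : ∫ x, G x = L (fun c x => Real.log (pf c x)) := by
    rw [hL]
    have h1 : ∫ x, G x = ∑ c, w c * ∫ x, e c x := by
      rw [show G = fun x => ∑ c, w c * e c x from funext hGe]
      rw [integral_finset_sum _ fun c _ => (he_int c).const_mul (w c)]
      exact Finset.sum_congr rfl fun c _ => integral_const_mul _ _
    rw [h1]
    exact Finset.sum_congr rfl fun c _ => by rw [integral_congr_ae (hI c)]
  -- minimality gives ∫ F ≤ ∫ G
  have hmin' : ∫ x, F x ≤ ∫ x, G x := by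
    rw [hintF, hintG]
    exact hmin _ (fun c => (hp_meas c).log) hstar_int
  -- pointwise identity for F - G at good points
  have hdiff : ∀ x, (∀ c, 0 < pf c x) → 0 < px x →
      F x - G x = ∑ c, (w c * pf c x) * Real.log ((w c * pf c x) /
        (px x * (w c * Real.exp (hhat c x) / (∑ k, w k * Real.exp (hhat k x))))) := by
    intro x hpf_pos hpxpos
    rw [hGe x, hF_def]
    rw [← Finset.sum_sub_distrib]
    apply Finset.sum_congr rfl
    intro c _
    have hr : (w c * pf c x) / (px x * (w c * Real.exp (hhat c x)
          / (∑ k, w k * Real.exp (hhat k x))))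
        = (pf c x * (∑ k, w k * Real.exp (hhat k x))) / (px x * Real.exp (hhat c x)) := by
      rw [div_eq_div_iff
        (mul_pos hpxpos (div_pos (mul_pos (hw_pos c) (Real.exp_pos _)) (hZpos x))).ne'
        (mul_pos hpxpos (Real.exp_pos _)).ne']
      field_simp [(hZpos x).ne']
    rw [hr, Real.log_div (mul_pos (hpf_pos c) (hZpos x)).ne'
        (mul_pos hpxpos (Real.exp_pos _)).ne',
      Real.log_mul (hpf_pos c).ne' (hZpos x).ne',
      Real.log_mul hpxpos.ne' (Real.exp_pos _).ne', Real.log_exp]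
    simp only [he_def]
    rw [Real.log_div (mul_pos (hw_pos c) (hpf_pos c)).ne' hpxpos.ne',
      Real.log_mul (hw_pos c).ne' (hpf_pos c).ne']
    ring
  -- F - G ≥ 0 a.e., and ∫ (F - G) ≤ 0, hence F = G a.e.
  have hFG_nonneg : ∀ᵐ x, 0 ≤ F x - G x := by
    filter_upwards [ae_all_iff.mpr hp_pos] with x hx
    rcases eq_or_lt_of_le (hpx_nonneg x) with h | h
    · have hz := hzero x h.symm
      simp [hF_def, hGe x, he_def, hz]
    · have hpf_pos : ∀ c, 0 < pf c x := fun c => hx c h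
      rw [hdiff x hpf_pos h]
      refine (gibbs_ineq _ _ (px x) ?_ (fun c => mul_pos (hw_pos c) (hpf_pos c))
        (fun c => div_pos (mul_pos (hw_pos c) (Real.exp_pos _)) (hZpos x)) ?_).1
      · exact (hpx x).symm
      · rw [← Finset.sum_div]
        exact div_self (hZpos x).ne'
  have hFGzero : (fun x => F x - G x) =ᵐ[volume] 0 := by
    have hint0 : ∫ x, (F x - G x) = 0 := by
      rw [integral_sub hF_int hG_int]
      have h1 : (0:ℝ) ≤ (∫ x, F x) - ∫ x, G x := by
        rw [← integral_sub hF_int hG_int]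
        exact integral_nonneg_of_ae hFG_nonneg
      linarith
    exact (integral_eq_zero_iff_of_nonneg_ae hFG_nonneg (hF_int.sub hG_int)).mp hint0
  -- conclusion
  rw [ae_withDensity_iff hpx_meas.ennreal_ofReal]
  filter_upwards [hFGzero, ae_all_iff.mpr hp_pos] with x hFGx hx _ hpxpos
  have hpf_pos : ∀ c, 0 < pf c x := fun c => hx c hpxpos
  have hFGx' : F x - G x = 0 := hFGx
  have heqc := (gibbs_ineq (fun c => w c * pf c x)
      (fun c => w c * Real.exp (hhat c x) / (∑ k, w k * Real.exp (hhat k x))) (px x)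
      (hpx x).symm (fun c => mul_pos (hw_pos c) (hpf_pos c))
      (fun c => div_pos (mul_pos (hw_pos c) (Real.exp_pos _)) (hZpos x))
      (by rw [← Finset.sum_div]; exact div_self (hZpos x).ne')).2
    (by rw [← hdiff x hpf_pos hpxpos]; exact hFGx')
  have h0eq : p x = px x * Real.exp (hhat 0 x) / (∑ k, w k * Real.exp (hhat k x)) := by
    have h := heqc 0
    rw [hpf0] at h
    have h' : w 0 * p x
        = w 0 * (px x * Real.exp (hhat 0 x) / (∑ k, w k * Real.exp (hhat k x))) := by
      rw [h]; ring
    exact mul_left_cancel₀ (hw_pos 0).ne' h'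
  have h1eq : q x = px x * Real.exp (hhat 1 x) / (∑ k, w k * Real.exp (hhat k x)) := by
    have h := heqc 1
    rw [hpf1] at h
    have h' : w 1 * q x
        = w 1 * (px x * Real.exp (hhat 1 x) / (∑ k, w k * Real.exp (hhat k x))) := by
      rw [h]; ring
    exact mul_left_cancel₀ (hw_pos 1).ne' h'
  rw [hlogr]
  have hratio : p x / q x = Real.exp (hhat 0 x - hhat 1 x) := by
    rw [h0eq, h1eq, Real.exp_sub]
    rw [div_eq_div_iff
        (div_pos (mul_pos hpxpos (Real.exp_pos _)) (hZpos x)).ne' (Real.exp_pos _).ne']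
    field_simp [(hZpos x).ne']
  rw [hratio, Real.log_exp]
end

section
/- Under the following hypotheses: (i) Θ ⊆ ℝ^p is compact and L : Θ → ℝ is continuous with unique minimizer θ̂; (ii) sup_{θ∈Θ} |L_n(θ) − L(θ)| → 0 in probability; (iii) there exists θ* ∈ Θ with P(Y=c|x; θ*) = P*(Y=c|x) for all c for p_x-almost every x; (iv) for every c and every x, the map θ ↦ h^c_θ(x) is continuous on Θ; and each density p_c is strictly positive on {x : p_x(x) > 0} — the plug-in log-ratio estimator is consistent: for every pair i, j and for p_x-almost every x with p_x(x) > 0, h^i_{θ̂_n}(x) − h^j_{θ̂_n}(x) → log( p_i(x)/p_j(x) ) in probability as n → ∞, where θ̂_n minimizes L_n over Θ. -/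
/-!
By Gibbs' inequality, the expected log-likelihood of any softmax model is at most that of the
Bayes posterior, so the realizable parameter `θ*` minimizes `L`; uniqueness forces `θ* = θ̂`, and at
`θ*` the softmax odds `h^i - h^j` are the log density ratio. It remains to see that a continuous
function `g` of the empirical minimizer converges in probability to `g θ̂`: on the compact part of
`Θ` where `g` is `ε`-far from `g θ̂`, `L` exceeds `L θ̂` by some `δ > 0`, so `θ̂ₙ` can only land
there when `sup_Θ |Lₙ - L| > δ / 3`.
-/

open MeasureTheory Topology Filter Real

section Gibbs

variable {ι : Type*} [Fintype ι]

theorem mul_log_le_mul_log_add_sub {q r : ℝ} (hq : 0 ≤ q) (hr : 0 < r) :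
    q * log r ≤ q * log q + (r - q) := by
  rcases hq.eq_or_lt with rfl | hq
  · simpa using hr.le
  · have hlog := log_le_sub_one_of_pos (div_pos hr hq)
    rw [log_div hr.ne' hq.ne'] at hlog
    have := mul_le_mul_of_nonneg_left hlog hq.le
    rw [mul_sub, mul_sub, mul_div_cancel₀ _ hq.ne'] at this
    linarith

theorem sum_mul_log_le_sum_mul_log {q r : ι → ℝ} (hq : ∀ c, 0 ≤ q c) (hr : ∀ c, 0 < r c)
    (hqr : ∑ c, r c ≤ ∑ c, q c) :
    ∑ c, q c * log (r c) ≤ ∑ c, q c * log (q c) := by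
  have hterm := Finset.sum_le_sum fun c (_ : c ∈ Finset.univ) =>
    mul_log_le_mul_log_add_sub (hq c) (hr c)
  rw [Finset.sum_add_distrib, Finset.sum_sub_distrib] at hterm
  linarith

theorem sum_mul_log_le_of_eq_div_sum {a r s : ι → ℝ} (ha : ∀ c, 0 ≤ a c) (hr : ∀ c, 0 < r c)
    (hr1 : ∑ c, r c = 1) (hs : 0 < ∑ k, a k → ∀ c, s c = a c / ∑ k, a k) :
    ∑ c, a c * log (r c) ≤ ∑ c, a c * log (s c) := by
  rcases (Finset.sum_nonneg fun c _ => ha c).eq_or_lt with hA | hA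
  · have ha0 : ∀ c, a c = 0 := fun c =>
      (Finset.sum_eq_zero_iff_of_nonneg fun c _ => ha c).1 hA.symm c (Finset.mem_univ c)
    simp [ha0]
  · simp only [hs hA]
    have hgibbs := sum_mul_log_le_sum_mul_log (q := fun c => a c / ∑ k, a k)
      (fun c => div_nonneg (ha c) hA.le) hr
      (by rw [hr1, ← Finset.sum_div, div_self hA.ne'])
    simpa only [Finset.mul_sum, ← mul_assoc, mul_div_cancel₀ _ hA.ne'] using
      mul_le_mul_of_nonneg_left hgibbs hA.le

variable {X : Type*} [MeasurableSpace X]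

theorem sum_mul_integral_mul_log_le_of_posterior {ν : Measure X} {w : ι → ℝ}
    {p r s : ι → X → ℝ} (hw : ∀ c, 0 ≤ w c) (hp : ∀ c x, 0 ≤ p c x) (hr : ∀ c x, 0 < r c x)
    (hr1 : ∀ x, ∑ c, r c x = 1)
    (hri : ∀ c, Integrable (fun x => p c x * log (r c x)) ν)
    (hsi : ∀ c, Integrable (fun x => p c x * log (s c x)) ν)
    (hs : ∀ᵐ x ∂ν, 0 < ∑ k, w k * p k x → ∀ c, s c x = w c * p c x / ∑ k, w k * p k x) :
    ∑ c, w c * ∫ x, p c x * log (r c x) ∂ν ≤ ∑ c, w c * ∫ x, p c x * log (s c x) ∂ν := by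
  simp only [← integral_const_mul]
  rw [← integral_finsetSum _ fun c _ => (hri c).const_mul _,
    ← integral_finsetSum _ fun c _ => (hsi c).const_mul _]
  refine integral_mono_ae (integrable_finsetSum _ fun c _ => (hri c).const_mul _)
    (integrable_finsetSum _ fun c _ => (hsi c).const_mul _) ?_
  filter_upwards [hs] with x hx
  simp only [← mul_assoc]
  exact sum_mul_log_le_of_eq_div_sum (fun c => mul_nonneg (hw c) (hp c x)) (fun c => hr c x)
    (hr1 x) hx

end Gibbs

section Softmax

variable {ι : Type*} [Fintype ι]

noncomputable def weightedSoftmax (w s : ι → ℝ) (c : ι) : ℝ :=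
  w c * exp (s c) / ∑ k, w k * exp (s k)

variable {w : ι → ℝ}

theorem sum_mul_exp_pos [Nonempty ι] (hw : ∀ c, 0 < w c) (s : ι → ℝ) :
    0 < ∑ k, w k * exp (s k) :=
  Finset.sum_pos (fun k _ => mul_pos (hw k) (exp_pos _)) Finset.univ_nonempty

theorem weightedSoftmax_pos (hw : ∀ c, 0 < w c) (s : ι → ℝ) (c : ι) :
    0 < weightedSoftmax w s c :=
  haveI : Nonempty ι := ⟨c⟩
  div_pos (mul_pos (hw c) (exp_pos _)) (sum_mul_exp_pos hw s)

theorem sum_weightedSoftmax [Nonempty ι] (hw : ∀ c, 0 < w c) (s : ι → ℝ) :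
    ∑ c, weightedSoftmax w s c = 1 := by
  simp only [weightedSoftmax]
  rw [← Finset.sum_div, div_self (sum_mul_exp_pos hw s).ne']

/-- The scores then differ from `log q` by a constant. -/
theorem sub_eq_log_div_of_weightedSoftmax_eq {s q : ι → ℝ} {T : ℝ} (hw : ∀ c, 0 < w c)
    (hT : T ≠ 0) (h : ∀ c, weightedSoftmax w s c = w c * q c / T) (i j : ι) :
    s i - s j = log (q i / q j) := by
  have : Nonempty ι := ⟨i⟩
  have hZ : ∑ k, w k * exp (s k) ≠ 0 := (sum_mul_exp_pos hw s).ne'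
  have hexp : ∀ c, exp (s c) = (∑ k, w k * exp (s k)) / T * q c := fun c => by
    have hc := h c
    rw [weightedSoftmax, div_eq_div_iff hZ hT, mul_assoc, mul_assoc,
      mul_right_inj' (hw c).ne'] at hc
    rw [div_mul_eq_mul_div, eq_div_iff hT]
    linarith
  rw [← log_exp (s i - s j), exp_sub, hexp i, hexp j,
    mul_div_mul_left _ _ (div_ne_zero hZ hT)]

end Softmax

section MEstimation

variable {ι α Ω : Type*} [TopologicalSpace α] [MeasurableSpace Ω]

/-- `sup_{θ ∈ s} |F i ω θ - f θ| → 0` in `μ`-probability along `l`; the event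
`∃ θ ∈ s, ε < |F i ω θ - f θ|` is `ε < sup`, and needs no measurability of the supremum. -/
def TendstoUniformlyOnInMeasure (μ : Measure Ω) (F : ι → Ω → α → ℝ) (l : Filter ι)
    (f : α → ℝ) (s : Set α) : Prop :=
  ∀ ε > (0 : ℝ), Tendsto (fun i => μ {ω | ∃ θ ∈ s, ε < |F i ω θ - f θ|}) l (𝓝 0)

theorem TendstoInMeasure.tendsto_measure_lt_dist {E : Type*} [PseudoMetricSpace E]
    {μ : Measure Ω} {f : ι → Ω → E} {l : Filter ι} {g : Ω → E}
    (h : TendstoInMeasure μ f l g) {ε : ℝ} (hε : 0 < ε) :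
    Tendsto (fun i => μ {ω | ε < dist (f i ω) (g ω)}) l (𝓝 0) :=
  tendsto_of_tendsto_of_tendsto_of_le_of_le tendsto_const_nhds
    (tendstoInMeasure_iff_dist.1 h ε hε) (fun _ => zero_le)
    fun _ => measure_mono fun _ hω => show ε ≤ _ from le_of_lt hω

/-- Consistency of M-estimators. -/
theorem TendstoUniformlyOnInMeasure.tendstoInMeasure_comp_of_isMinOn {E : Type*}
    [PseudoMetricSpace E] {μ : Measure Ω} {Ln : ι → Ω → α → ℝ} {l : Filter ι} {L : α → ℝ}
    {Θ : Set α} (hLn : TendstoUniformlyOnInMeasure μ Ln l L Θ) (hΘ : IsCompact Θ)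
    (hL : ContinuousOn L Θ) {θhat : α} (hθhat : θhat ∈ Θ)
    (hmin : ∀ θ ∈ Θ, θ ≠ θhat → L θhat < L θ) {θn : ι → Ω → α} (hθn_mem : ∀ i ω, θn i ω ∈ Θ)
    (hθn_min : ∀ i ω, IsMinOn (Ln i ω) Θ (θn i ω)) {g : α → E} (hg : ContinuousOn g Θ) :
    TendstoInMeasure μ (fun i ω => g (θn i ω)) l (fun _ => g θhat) := by
  rw [tendstoInMeasure_iff_dist]
  intro ε hε
  set K := Θ ∩ (fun θ => dist (g θ) (g θhat)) ⁻¹' Set.Ici ε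
  have hdist : ContinuousOn (fun θ => dist (g θ) (g θhat)) Θ := by fun_prop
  have hK : IsCompact K := hdist.upperSemicontinuousOn.isCompact_inter_preimage_Ici hΘ ε
  have hK_gt : ∀ θ ∈ K, L θhat < L θ := fun θ hθ =>
    hmin θ hθ.1 fun hθhat' => by
      have hθε : ε ≤ dist (g θ) (g θhat) := hθ.2
      rw [hθhat', dist_self] at hθε
      exact hε.not_ge hθε
  obtain ⟨a, hθhat_a, ha⟩ := hK.exists_forall_le' (hL.mono Set.inter_subset_left) hK_gt
  have hevent : ∀ i, {ω | ε ≤ dist (g (θn i ω)) (g θhat)} ⊆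
      {ω | ∃ θ ∈ Θ, (a - L θhat) / 3 < |Ln i ω θ - L θ|} := by
    intro i ω hω
    by_contra hsmall
    simp only [Set.mem_ofPred_eq, not_exists, not_and, not_lt] at hsmall
    have hLa := ha (θn i ω) ⟨hθn_mem i ω, hω⟩
    have hle := isMinOn_iff.1 (hθn_min i ω) θhat hθhat
    have h1 := abs_le.1 (hsmall _ (hθn_mem i ω))
    have h2 := abs_le.1 (hsmall _ hθhat)
    linarith [h1.1, h2.2]
  exact tendsto_of_tendsto_of_tendsto_of_le_of_le tendsto_const_nhds
    (hLn _ (by linarith)) (fun _ => zero_le) fun i => measure_mono (hevent i)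

end MEstimation

theorem plug_in_log_ratio_consistency_general
    {d C P : ℕ}
    {Ω : Type*} [MeasurableSpace Ω]
    (μ : Measure Ω)
    (p : Fin C → (Fin d → ℝ) → ℝ) (w : Fin C → ℝ)
    (hp_meas : ∀ c, Measurable (p c))
    (hp_nonneg : ∀ c x, 0 ≤ p c x)
    (hw_pos : ∀ c, 0 < w c)
    (px : (Fin d → ℝ) → ℝ)
    (hpx : ∀ x, px x = ∑ c, w c * p c x)
    (Pstar : Fin C → (Fin d → ℝ) → ℝ)
    (hPstar : ∀ c x, Pstar c x = w c * p c x / px x)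
    (Θ : Set (Fin P → ℝ)) (hΘ : IsCompact Θ)
    (h : (Fin P → ℝ) → Fin C → (Fin d → ℝ) → ℝ)
    -- (iv) for every `c` and `x`, `θ ↦ h θ c x` is continuous on `Θ`:
    (hh_cont : ∀ c x, ContinuousOn (fun θ => h θ c x) Θ)
    (Pm : (Fin P → ℝ) → Fin C → (Fin d → ℝ) → ℝ)
    (hPm : ∀ θ c x, Pm θ c x =
      w c * Real.exp (h θ c x) / ∑ k, w k * Real.exp (h θ k x))
    (L : (Fin P → ℝ) → ℝ)
    (hLdef : ∀ θ, L θ = -∑ c, w c * ∫ x, p c x * Real.log (Pm θ c x))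
    -- `L θ` is finite for all `θ`:
    (hLfin : ∀ θ, ∀ c, Integrable (fun x => p c x * Real.log (Pm θ c x)))
    -- (i) `L` is continuous on `Θ` with unique minimizer `θ̂`:
    (hLcont : ContinuousOn L Θ)
    (θhat : Fin P → ℝ) (hθhat : θhat ∈ Θ)
    (hmin : ∀ θ ∈ Θ, θ ≠ θhat → L θhat < L θ)
    -- (iii) realizability:
    (θstar : Fin P → ℝ) (hθstar : θstar ∈ Θ)
    (hreal : ∀ᵐ x ∂(volume.withDensity fun x => ENNReal.ofReal (px x)),
      ∀ c, Pm θstar c x = Pstar c x)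
    -- (ii) random continuous empirical losses converging uniformly on `Θ` in probability:
    (Ln : ℕ → Ω → (Fin P → ℝ) → ℝ)
    (hunif : ∀ ε > (0 : ℝ), Tendsto
      (fun n => μ {ω | ∃ θ ∈ Θ, ε < |Ln n ω θ - L θ|}) atTop (𝓝 0))
    -- `θ̂ n` is a measurable choice of minimizer of `L n` over `Θ`:
    (θhatn : ℕ → Ω → Fin P → ℝ)
    (hθhatn_mem : ∀ n ω, θhatn n ω ∈ Θ)
    (hθhatn_min : ∀ n ω, ∀ θ ∈ Θ, Ln n ω (θhatn n ω) ≤ Ln n ω θ) :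
    ∀ i j : Fin C,
      ∀ᵐ x ∂(volume.withDensity fun x => ENNReal.ofReal (px x)),
        0 < px x →
          ∀ ε > (0 : ℝ), Tendsto
            (fun n => μ {ω | ε <
              |h (θhatn n ω) i x - h (θhatn n ω) j x - Real.log (p i x / p j x)|})
            atTop (𝓝 0) := by
  intro i j
  have : Nonempty (Fin C) := ⟨i⟩
  have hPm_softmax : ∀ θ x c, Pm θ c x = weightedSoftmax w (h θ · x) c :=
    fun θ x c => hPm θ c x
  have hpx_meas : Measurable px := by
    rw [funext hpx]
    fun_prop
  have hreal_vol : ∀ᵐ x, 0 < ∑ k, w k * p k x →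
      ∀ c, Pm θstar c x = w c * p c x / ∑ k, w k * p k x := by
    filter_upwards [(ae_withDensity_iff hpx_meas.ennreal_ofReal).1 hreal] with x hx hpos c
    rw [← hpx] at hpos ⊢
    exact (hx (ENNReal.ofReal_pos.2 hpos).ne' c).trans (hPstar c x)
  have hstar_le : L θstar ≤ L θhat := by
    rw [hLdef, hLdef, neg_le_neg_iff]
    refine sum_mul_integral_mul_log_le_of_posterior (fun c => (hw_pos c).le) hp_nonneg
      (fun c x => ?_) (fun x => ?_) (hLfin θhat) (hLfin θstar) hreal_vol
    · rw [hPm_softmax]; exact weightedSoftmax_pos hw_pos _ c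
    · simp only [hPm_softmax]; exact sum_weightedSoftmax hw_pos _
  obtain rfl : θstar = θhat := by_contra fun hne => (hmin θstar hθstar hne).not_ge hstar_le
  filter_upwards [hreal] with x hx hpx_pos ε hε
  have hlog : h θstar i x - h θstar j x = Real.log (p i x / p j x) :=
    sub_eq_log_div_of_weightedSoftmax_eq hw_pos hpx_pos.ne'
      (fun c => (hPm_softmax _ x c).symm.trans ((hx c).trans (hPstar c x))) i j
  rw [← hlog]
  refine TendstoInMeasure.tendsto_measure_lt_dist (E := ℝ) ?_ hε
  exact TendstoUniformlyOnInMeasure.tendstoInMeasure_comp_of_isMinOn hunif hΘ hLcont hθhat hmin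
    hθhatn_mem (fun n ω => isMinOn_iff.2 (hθhatn_min n ω)) (g := fun θ => h θ i x - h θ j x)
    ((hh_cont i x).sub (hh_cont j x))

/-- Consistency of the plug-in log-ratio estimator: under compactness of
`Θ`, continuity and unique minimizer `θ̂` of the population loss `L`, uniform convergence
in probability of the empirical losses, realizability, continuity of `θ ↦ h θ c x` on
`Θ`, and a.e. strict positivity of each density on `{x | 0 < p_x x}`, for every pair
`i, j` and `p_x`-almost every `x` with `p_x x > 0`,
`h (θ̂ n) i x − h (θ̂ n) j x → log (p i x / p j x)` in probability. -/
theorem plug_in_log_ratio_consistency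
    {d C P : ℕ} (hC : 2 ≤ C)
    {Ω : Type*} [MeasurableSpace Ω]
    (μ : Measure Ω) [IsProbabilityMeasure μ]
    (p : Fin C → (Fin d → ℝ) → ℝ) (w : Fin C → ℝ)
    (hp_meas : ∀ c, Measurable (p c))
    (hp_nonneg : ∀ c x, 0 ≤ p c x)
    (hp_prob : ∀ c, ∫ x, p c x = 1)
    (hw_pos : ∀ c, 0 < w c) (hw_sum : ∑ c, w c = 1)
    (px : (Fin d → ℝ) → ℝ)
    (hpx : ∀ x, px x = ∑ c, w c * p c x)
    (Pstar : Fin C → (Fin d → ℝ) → ℝ)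
    (hPstar : ∀ c x, Pstar c x = w c * p c x / px x)
    -- each density is strictly positive on `{x | 0 < px x}` (Lebesgue-a.e.):
    (hp_pos : ∀ c, ∀ᵐ x, 0 < px x → 0 < p c x)
    (Θ : Set (Fin P → ℝ)) (hΘ : IsCompact Θ)
    (h : (Fin P → ℝ) → Fin C → (Fin d → ℝ) → ℝ)
    (hh_meas : ∀ θ c, Measurable (h θ c))
    -- (iv) for every `c` and `x`, `θ ↦ h θ c x` is continuous on `Θ`:
    (hh_cont : ∀ c x, ContinuousOn (fun θ => h θ c x) Θ)
    (Pm : (Fin P → ℝ) → Fin C → (Fin d → ℝ) → ℝ)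
    (hPm : ∀ θ c x, Pm θ c x =
      w c * Real.exp (h θ c x) / ∑ k, w k * Real.exp (h θ k x))
    (L : (Fin P → ℝ) → ℝ)
    (hLdef : ∀ θ, L θ = -∑ c, w c * ∫ x, p c x * Real.log (Pm θ c x))
    -- `L θ` is finite for all `θ`:
    (hLfin : ∀ θ, ∀ c, Integrable (fun x => p c x * Real.log (Pm θ c x)))
    -- the conditional entropy is finite:
    (hHfin : Integrable (fun x => px x * ∑ c, Pstar c x * Real.log (Pstar c x)))
    -- (i) `L` is continuous on `Θ` with unique minimizer `θ̂`:
    (hLcont : ContinuousOn L Θ)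
    (θhat : Fin P → ℝ) (hθhat : θhat ∈ Θ)
    (hmin : ∀ θ ∈ Θ, θ ≠ θhat → L θhat < L θ)
    -- (iii) realizability:
    (θstar : Fin P → ℝ) (hθstar : θstar ∈ Θ)
    (hreal : ∀ᵐ x ∂(volume.withDensity fun x => ENNReal.ofReal (px x)),
      ∀ c, Pm θstar c x = Pstar c x)
    -- (ii) random continuous empirical losses converging uniformly on `Θ` in probability:
    (Ln : ℕ → Ω → (Fin P → ℝ) → ℝ)
    (hLncont : ∀ n ω, ContinuousOn (Ln n ω) Θ)
    (hunif : ∀ ε > (0 : ℝ), Tendsto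
      (fun n => μ {ω | ∃ θ ∈ Θ, ε < |Ln n ω θ - L θ|}) atTop (𝓝 0))
    -- `θ̂ n` is a measurable choice of minimizer of `L n` over `Θ`:
    (θhatn : ℕ → Ω → Fin P → ℝ)
    (hθhatn_meas : ∀ n, Measurable (θhatn n))
    (hθhatn_mem : ∀ n ω, θhatn n ω ∈ Θ)
    (hθhatn_min : ∀ n ω, ∀ θ ∈ Θ, Ln n ω (θhatn n ω) ≤ Ln n ω θ) :
    ∀ i j : Fin C,
      ∀ᵐ x ∂(volume.withDensity fun x => ENNReal.ofReal (px x)),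
        0 < px x →
          ∀ ε > (0 : ℝ), Tendsto
            (fun n => μ {ω | ε <
              |h (θhatn n ω) i x - h (θhatn n ω) j x - Real.log (p i x / p j x)|})
            atTop (𝓝 0) :=
  plug_in_log_ratio_consistency_general μ p w hp_meas hp_nonneg hw_pos px hpx Pstar hPstar Θ hΘ h
    hh_cont Pm hPm L hLdef hLfin hLcont θhat hθhat hmin θstar hθstar hreal Ln hunif θhatn hθhatn_mem
    hθhatn_min
end
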